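/- arXiv:1111.1857 — 3 statements merged into one kernel-verified Lean document; each statement's English description precedes it below -/
import Mathlib

section
/- Consider the chain $m_n \ddot{x}_n = V_n'(x_{n+1}-x_n) - V_{n-1}'(x_n-x_{n-1})$ with $m_n>0$, $V_n(x) = W_n[(-x)_+]$, where $W_n \in C^1(\mathbb{R}_+, \mathbb{R}_+)$, $W_n'(0)=0$, $W_n'(x)>0$ for $x>0$, and there exist $r>0$, $n_0 \in \mathbb{Z}$, and a monotone increasing continuous function $f$ on $[0,r]$ with $f(0)=0$ such that $W_n'(x) \le f(x)$ for all $x \in [0,r]$ and all $n \ge n_0$. Then every $T$-periodic solution satisfying $\lim_{n\to+\infty} \|x_n - x_{n-1}\|_{L^\infty} = 0$ is independent of $t$ and nondecreasing in $n$. -/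
/-!
Integrating Newton's equation for `x n` over one period, the left-hand side vanishes by
periodicity, so the time-averaged compressive force in bond `n` does not depend on `n`. Far along
the chain the relative displacements are small, so this force is uniformly small by the bound
`W n' ≤ f`; hence the common average is zero. A nonnegative continuous periodic force with zero
average vanishes identically, so every bond is uncompressed (`x n ≤ x (n + 1)`) and every
particle has zero acceleration, which for a periodic motion means it is at rest.
-/

open MeasureTheory Set Filter Function Topology

theorem Function.Periodic.intervalIntegral_deriv_eq_zero {g : ℝ → ℝ} {T : ℝ}
    (hg : Periodic g T) (hd : ContDiff ℝ 1 g) : ∫ t in (0 : ℝ)..T, deriv g t = 0 := by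
  rw [intervalIntegral.integral_deriv_eq_sub (fun t _ => hd.differentiable one_ne_zero t)
    ((hd.continuous_deriv le_rfl).intervalIntegrable 0 T), ← zero_add T, hg 0, sub_self]

theorem Function.Periodic.eq_zero_of_intervalIntegral_eq_zero {g : ℝ → ℝ} {T : ℝ}
    (hT : 0 < T) (hg : Periodic g T) (hc : Continuous g) (hnn : 0 ≤ g)
    (hI : ∫ t in (0 : ℝ)..T, g t = 0) (t : ℝ) : g t = 0 := by
  have hI' : ∫ s in (t - T)..(t - T) + T, g s = 0 := by
    rwa [hg.intervalIntegral_add_eq (t - T) 0, zero_add]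
  have hae := (intervalIntegral.integral_eq_zero_iff_of_le_of_nonneg_ae (by linarith)
    (Eventually.of_forall hnn) (hc.intervalIntegrable _ _)).1 hI'
  exact Measure.eqOn_Ioc_of_ae_eq volume hae hc.continuousOn continuousOn_const
    ⟨by linarith, by linarith⟩

theorem Function.Periodic.apply_eq_of_deriv_deriv_eq_zero {g : ℝ → ℝ} {T : ℝ} (hT : 0 < T)
    (hg : Periodic g T) (hd : Differentiable ℝ g) (hd' : Differentiable ℝ (deriv g))
    (h : ∀ t, deriv (deriv g) t = 0) (t s : ℝ) : g t = g s := by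
  -- Rolle on one period gives a critical point of `deriv g`, which is constant.
  obtain ⟨c, -, hc⟩ :=
    exists_deriv_eq_zero hT hd.continuous.continuousOn (by simpa using (hg 0).symm)
  have hd0 : ∀ u, deriv g u = 0 := fun u => (is_const_of_deriv_eq_zero hd' h u c).trans hc
  exact is_const_of_deriv_eq_zero hd hd0 t s

theorem Function.Periodic.deriv {g : ℝ → ℝ} {T : ℝ} (hg : Periodic g T) :
    Periodic (deriv g) T := fun t => by
  rw [← deriv_comp_add_const, show (fun s => g (s + T)) = g from funext hg]

-- Since `V n y = W n ((-y)₊)`, this is `-V n' (x (n + 1) t - x n t)`, with `DW n = W n'`.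
def bondForce (DW : ℤ → ℝ → ℝ) (x : ℤ → ℝ → ℝ) (n : ℤ) (t : ℝ) : ℝ :=
  DW n (max (x n t - x (n + 1) t) 0)

section bondForce

variable {DW : ℤ → ℝ → ℝ} {x : ℤ → ℝ → ℝ}

theorem bondForce_nonneg (hDW0 : ∀ n, DW n 0 = 0) (hDWpos : ∀ n, ∀ y > (0 : ℝ), 0 < DW n y)
    (n : ℤ) (t : ℝ) : 0 ≤ bondForce DW x n t := by
  rcases (le_max_right (x n t - x (n + 1) t) 0).lt_or_eq with h | h
  · exact (hDWpos n _ h).le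
  · simp [bondForce, ← h, hDW0 n]

theorem le_of_bondForce_eq_zero (hDWpos : ∀ n, ∀ y > (0 : ℝ), 0 < DW n y) {n : ℤ} {t : ℝ}
    (h : bondForce DW x n t = 0) : x n t ≤ x (n + 1) t := by
  by_contra! hlt
  exact (hDWpos n _ (lt_max_of_lt_left (sub_pos.2 hlt))).ne' h

theorem continuous_bondForce (hDW : ∀ n, ContinuousOn (DW n) (Ici 0))
    (hx : ∀ n, Continuous (x n)) (n : ℤ) : Continuous (bondForce DW x n) :=
  (hDW n).comp_continuous (((hx n).sub (hx (n + 1))).max continuous_const)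
    fun _ => mem_Ici.2 (le_max_right _ _)

theorem bondForce_periodic {T : ℝ} (hx : ∀ n, Periodic (x n) T) (n : ℤ) :
    Periodic (bondForce DW x n) T := fun t => by
  simp only [bondForce, (hx _) t]

theorem exists_forall_bondForce_le {f : ℝ → ℝ} {r : ℝ} {n₀ : ℤ} (hr : 0 < r)
    (hf : ContinuousWithinAt f (Icc 0 r) 0) (hf0 : f 0 = 0)
    (hbound : ∀ n ≥ n₀, ∀ y ∈ Icc (0 : ℝ) r, DW n y ≤ f y)
    (hloc : ∀ ε > (0 : ℝ), ∃ N : ℤ, ∀ n ≥ N, ∀ t, |x n t - x (n - 1) t| ≤ ε)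
    {ε : ℝ} (hε : 0 < ε) : ∃ N, ∀ n ≥ N, ∀ t, bondForce DW x n t ≤ ε := by
  have hsmall : ∀ᶠ y in 𝓝[≥] 0, f y < ε := by
    rw [← nhdsWithin_Icc_eq_nhdsGE hr]
    exact hf.eventually (Iio_mem_nhds (by rwa [hf0]))
  obtain ⟨δ, hδ, hδε⟩ := mem_nhdsGE_iff_exists_Icc_subset.1 hsmall
  obtain ⟨N, hN⟩ := hloc (min δ r) (lt_min hδ hr)
  refine ⟨max N n₀, fun n hn t => ?_⟩
  have hy : max (x n t - x (n + 1) t) 0 ∈ Icc 0 (min δ r) := by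
    refine ⟨le_max_right _ _, max_le ?_ (lt_min hδ hr).le⟩
    have hclose := hN (n + 1) (by omega) t
    rw [add_sub_cancel_right, abs_le] at hclose
    linarith
  calc bondForce DW x n t ≤ f (max (x n t - x (n + 1) t) 0) :=
        hbound n (le_of_max_le_right hn) _ ⟨hy.1, hy.2.trans (min_le_right _ _)⟩
    _ ≤ ε := (hδε ⟨hy.1, hy.2.trans (min_le_left _ _)⟩).le

end bondForce

theorem intervalIntegral_eq_of_mul_deriv_deriv_eq_sub {m : ℤ → ℝ} {x F : ℤ → ℝ → ℝ}
    {T : ℝ} (hx : ∀ n, ContDiff ℝ 2 (x n)) (hper : ∀ n, Periodic (x n) T)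
    (hF : ∀ n, Continuous (F n))
    (h : ∀ n t, m n * deriv (deriv (x n)) t = F (n - 1) t - F n t) (n : ℤ) :
    ∫ t in (0 : ℝ)..T, F n t = ∫ t in (0 : ℝ)..T, F 0 t := by
  have hstep : Periodic (fun n => ∫ t in (0 : ℝ)..T, F n t) 1 := fun n => by
    have hdiff : (fun t => F n t - F (n + 1) t) =
        fun t => m (n + 1) * deriv (deriv (x (n + 1))) t :=
      funext fun t => by rw [h, add_sub_cancel_right]
    have hsub := intervalIntegral.integral_sub ((hF n).intervalIntegrable (μ := volume) 0 T)
      ((hF (n + 1)).intervalIntegrable 0 T)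
    rw [hdiff, intervalIntegral.integral_const_mul,
      (hper (n + 1)).deriv.intervalIntegral_deriv_eq_zero (hx (n + 1)).deriv', mul_zero] at hsub
    linarith
  simpa using hstep.int_mul_eq n

theorem no_breathers_repulsive_FPU_general
    (m : ℤ → ℝ) (hm : ∀ n, 0 < m n)
    (DW : ℤ → ℝ → ℝ)
    (hDWcont : ∀ n, ContinuousOn (DW n) (Set.Ici 0))
    (hDW0 : ∀ n, DW n 0 = 0)
    (hDWpos : ∀ n, ∀ y > (0:ℝ), 0 < DW n y)
    (r : ℝ) (hr : 0 < r) (n₀ : ℤ) (f : ℝ → ℝ)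
    (hfcont : ContinuousOn f (Set.Icc 0 r))
    (hf0 : f 0 = 0)
    (hbound : ∀ n ≥ n₀, ∀ y ∈ Set.Icc (0:ℝ) r, DW n y ≤ f y)
    (x : ℤ → ℝ → ℝ) (hx : ∀ n, ContDiff ℝ 2 (x n))
    (T : ℝ) (hT : 0 < T)
    (hper : ∀ n t, x n (t + T) = x n t)
    (heq : ∀ n t, m n * deriv (deriv (x n)) t
      = -DW n (max (x n t - x (n+1) t) 0)
        + DW (n-1) (max (x (n-1) t - x n t) 0))
    (hloc : ∀ ε > (0:ℝ), ∃ N : ℤ, ∀ n ≥ N, ∀ t, |x n t - x (n-1) t| ≤ ε) :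
    (∀ n t s, x n t = x n s) ∧ (∀ n t, x n t ≤ x (n+1) t) := by
  have hFcont := continuous_bondForce hDWcont fun n => (hx n).continuous
  have hFnonneg := bondForce_nonneg (x := x) hDW0 hDWpos
  have hnewton : ∀ n t,
      m n * deriv (deriv (x n)) t = bondForce DW x (n - 1) t - bondForce DW x n t := by
    intro n t
    rw [heq, bondForce, bondForce, sub_add_cancel, neg_add_eq_sub]
  have hflux := intervalIntegral_eq_of_mul_deriv_deriv_eq_sub hx hper hFcont hnewton
  have hflux0 : ∫ t in (0 : ℝ)..T, bondForce DW x 0 t = 0 := by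
    refine le_antisymm (le_of_forall_pos_le_add fun ε hε => ?_)
      (intervalIntegral.integral_nonneg hT.le fun t _ => hFnonneg 0 t)
    obtain ⟨N, hN⟩ :=
      exists_forall_bondForce_le hr (hfcont 0 ⟨le_rfl, hr.le⟩) hf0 hbound hloc (div_pos hε hT)
    calc ∫ t in (0 : ℝ)..T, bondForce DW x 0 t = ∫ t in (0 : ℝ)..T, bondForce DW x N t :=
          (hflux N).symm
      _ ≤ ∫ _ in (0 : ℝ)..T, ε / T := intervalIntegral.integral_mono_on hT.le
          ((hFcont N).intervalIntegrable 0 T) intervalIntegrable_const fun t _ => hN N le_rfl t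
      _ = 0 + ε := by rw [intervalIntegral.integral_const, smul_eq_mul]; field_simp; ring
  have hFzero : ∀ n t, bondForce DW x n t = 0 := fun n =>
    (bondForce_periodic hper n).eq_zero_of_intervalIntegral_eq_zero hT (hFcont n) (hFnonneg n)
      (by rw [hflux, hflux0])
  have hstatic : ∀ n t s, x n t = x n s := fun n =>
    Periodic.apply_eq_of_deriv_deriv_eq_zero hT (hper n) ((hx n).differentiable two_ne_zero)
      ((hx n).deriv'.differentiable one_ne_zero) fun t => by
        simpa [hFzero, (hm n).ne'] using hnewton n t
  exact ⟨hstatic, fun n t => le_of_bondForce_eq_zero hDWpos (hFzero n t)⟩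

/-- Nonexistence of breathers in FPU chains with repulsive unilateral
interactions `V_n(x) = W_n((-x)_+)`: every `T`-periodic solution whose relative
displacements tend to `0` (uniformly in time) as `n → +∞` is a static,
nondecreasing (in `n`) equilibrium. -/
theorem no_breathers_repulsive_FPU
    (m : ℤ → ℝ) (hm : ∀ n, 0 < m n)
    (W DW : ℤ → ℝ → ℝ)
    (hW : ∀ n, ∀ y ≥ (0:ℝ), HasDerivAt (W n) (DW n y) y)
    (hDWcont : ∀ n, ContinuousOn (DW n) (Set.Ici 0))
    (hWpos : ∀ n, ∀ y ≥ (0:ℝ), 0 ≤ W n y)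
    (hDW0 : ∀ n, DW n 0 = 0)
    (hDWpos : ∀ n, ∀ y > (0:ℝ), 0 < DW n y)
    (r : ℝ) (hr : 0 < r) (n₀ : ℤ) (f : ℝ → ℝ)
    (hfcont : ContinuousOn f (Set.Icc 0 r))
    (hfmono : MonotoneOn f (Set.Icc 0 r))
    (hf0 : f 0 = 0)
    (hbound : ∀ n ≥ n₀, ∀ y ∈ Set.Icc (0:ℝ) r, DW n y ≤ f y)
    (x : ℤ → ℝ → ℝ) (hx : ∀ n, ContDiff ℝ 2 (x n))
    (T : ℝ) (hT : 0 < T)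
    (hper : ∀ n t, x n (t + T) = x n t)
    (heq : ∀ n t, m n * deriv (deriv (x n)) t
      = -DW n (max (x n t - x (n+1) t) 0)
        + DW (n-1) (max (x (n-1) t - x n t) 0))
    (hloc : ∀ ε > (0:ℝ), ∃ N : ℤ, ∀ n ≥ N, ∀ t, |x n t - x (n-1) t| ≤ ε) :
    (∀ n t s, x n t = x n s) ∧ (∀ n t, x n t ≤ x (n+1) t) :=
  no_breathers_repulsive_FPU_general m hm DW hDWcont hDW0 hDWpos r hr n₀ f hfcont hf0 hbound x hx T
    hT hper heq hloc
end

section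
/- The function $g(x) = (3/10)^3 \cos^6(x/3)$ for $|x| \le 3\pi/2$ and $g(x) = 0$ otherwise, is $C^2$ on $\mathbb{R}$ and satisfies the differential equation $g'' = -4g + g\,|g|^{-1/3}$ on the open interval $(-3\pi/2, 3\pi/2)$ (where $g > 0$, so $g|g|^{-1/3} = g^{2/3}$). -/
open Real Filter Topology Set

/-!
On `(-3π/2, 3π/2)` the compacton is `c cos⁶(x/3)` with `c = (3/10)³`, whose second
derivative is `c (10/3 cos⁴(x/3) - 4 cos⁶(x/3))`; the choice of `c` makes
`(10/3) c cos⁴ = (c cos⁶)^{2/3}`.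
For regularity, the compacton agrees with `c max(cos(x/3), 0)⁶` for `|x| < 9π/2` and vanishes
for `|x| > 3π/2`, and `t ↦ max(t, 0)^(k+1)` is `C^k`.
-/

noncomputable def compacton (x : ℝ) : ℝ :=
  if |x| ≤ 3 * π / 2 then (3/10)^3 * Real.cos (x/3) ^ 6 else 0

theorem hasDerivAt_max_zero_pow_succ {n : ℕ} (hn : n ≠ 0) (t : ℝ) :
    HasDerivAt (fun s : ℝ => max s 0 ^ (n + 1)) ((n + 1) * max t 0 ^ n) t := by
  rcases lt_trichotomy t 0 with ht | rfl | ht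
  · have hzero : (fun s : ℝ => max s 0 ^ (n + 1)) =ᶠ[𝓝 t] fun _ => 0 := by
      filter_upwards [eventually_lt_nhds ht] with s hs
      simp [max_eq_right hs.le]
    simpa [max_eq_right ht.le, hn] using (hasDerivAt_const t (0 : ℝ)).congr_of_eventuallyEq hzero
  · have hleft : HasDerivWithinAt (fun s : ℝ => max s 0 ^ (n + 1)) 0 (Iic 0) 0 :=
      (hasDerivWithinAt_const 0 _ 0).congr
        (fun s hs => by simp [max_eq_right (show s ≤ 0 from hs)]) (by simp)
    have hright : HasDerivWithinAt (fun s : ℝ => max s 0 ^ (n + 1)) 0 (Ici 0) 0 := by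
      have := (hasDerivAt_pow (n + 1) (0 : ℝ)).hasDerivWithinAt (s := Ici 0)
      rw [Nat.add_sub_cancel, zero_pow hn, mul_zero] at this
      exact this.congr (fun s hs => by simp [max_eq_left (show (0:ℝ) ≤ s from hs)]) (by simp)
    simpa [hn, ← hasDerivWithinAt_univ] using hleft.union hright
  · have hpow : (fun s : ℝ => max s 0 ^ (n + 1)) =ᶠ[𝓝 t] fun s => s ^ (n + 1) := by
      filter_upwards [eventually_gt_nhds ht] with s hs
      simp [max_eq_left hs.le]
    simpa [max_eq_left ht.le] using (hasDerivAt_pow (n + 1) t).congr_of_eventuallyEq hpow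

theorem contDiff_max_zero_pow_succ (k : ℕ) : ContDiff ℝ k fun t : ℝ => max t 0 ^ (k + 1) := by
  induction k with
  | zero => simpa using continuous_id.max (continuous_const (y := (0 : ℝ)))
  | succ k ih =>
    have hderiv := hasDerivAt_max_zero_pow_succ (Nat.succ_ne_zero k)
    rw [Nat.cast_succ, contDiff_succ_iff_deriv]
    refine ⟨fun t => (hderiv t).differentiableAt, by simp, ?_⟩
    rw [funext fun t => (hderiv t).deriv]
    exact contDiff_const.mul ih

theorem deriv_deriv_const_mul_cos_div_three_pow_six (c x : ℝ) :
    deriv (deriv fun y => c * cos (y / 3) ^ 6) x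
      = c * (10 / 3 * cos (x / 3) ^ 4 - 4 * cos (x / 3) ^ 6) := by
  have hcos (y : ℝ) : HasDerivAt (fun z => cos (z / 3)) (-sin (y / 3) / 3) y := by
    simpa [div_eq_mul_inv] using ((hasDerivAt_id y).div_const 3).cos
  have hsin (y : ℝ) : HasDerivAt (fun z => sin (z / 3)) (cos (y / 3) / 3) y := by
    simpa [div_eq_mul_inv] using ((hasDerivAt_id y).div_const 3).sin
  have hfirst :
      deriv (fun y => c * cos (y / 3) ^ 6) = fun y => -2 * c * (cos (y / 3) ^ 5 * sin (y / 3)) := by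
    funext y
    rw [(((hcos y).fun_pow 6).const_mul c).deriv]
    push_cast
    ring
  rw [hfirst, ((((hcos x).fun_pow 5).fun_mul (hsin x)).const_mul (-2 * c)).deriv]
  push_cast
  linear_combination (10 / 3 * c * cos (x / 3) ^ 4) * sin_sq (x / 3)

theorem pow_three_mul_abs_pow_three_rpow_neg_one_third {u : ℝ} (hu : 0 ≤ u) :
    u ^ 3 * |u ^ 3| ^ (-(1 : ℝ) / 3) = u ^ 2 := by
  rcases hu.eq_or_lt with rfl | hu
  · simp
  rw [abs_of_pos (by positivity), ← rpow_natCast u 3, ← rpow_mul hu.le]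
  norm_num [rpow_neg_one]
  field_simp

theorem compacton_eq_max_cos_zero_pow {x : ℝ} (hx : |x| < 9 * π / 2) :
    compacton x = (3 / 10) ^ 3 * max (cos (x / 3)) 0 ^ 6 := by
  have hx3 : |x / 3| = |x| / 3 := by rw [abs_div, abs_of_pos (three_pos : (0 : ℝ) < 3)]
  by_cases hin : |x| ≤ 3 * π / 2
  · have hcos : 0 ≤ cos (x / 3) := by
      rw [← cos_abs, hx3]
      exact cos_nonneg_of_neg_pi_div_two_le_of_le (by linarith [abs_nonneg x, pi_pos]) (by linarith)
    rw [compacton, if_pos hin, max_eq_left hcos]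
  · have hcos : cos (x / 3) < 0 := by
      rw [← cos_abs, hx3]
      exact cos_neg_of_pi_div_two_lt_of_lt (by linarith) (by linarith)
    simp [compacton, hin, max_eq_right hcos.le]

theorem compacton_eventuallyEq_of_mem_Ioo {x : ℝ} (hx : x ∈ Ioo (-(3 * π / 2)) (3 * π / 2)) :
    compacton =ᶠ[𝓝 x] fun y => (3 / 10) ^ 3 * cos (y / 3) ^ 6 := by
  filter_upwards [isOpen_Ioo.mem_nhds hx] with y hy
  rw [compacton, if_pos (abs_le.2 ⟨hy.1.le, hy.2.le⟩)]

theorem contDiff_compacton : ContDiff ℝ 2 compacton := by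
  rw [contDiff_iff_contDiffAt]
  intro x
  rcases lt_or_ge |x| (9 * π / 2) with hx | hx
  · have hglued : ContDiff ℝ 2 fun y => (3 / 10 : ℝ) ^ 3 * max (cos (y / 3)) 0 ^ 6 :=
      contDiff_const.mul (((contDiff_max_zero_pow_succ 5).of_le (by norm_num)).comp
        (contDiff_cos.comp (contDiff_id.div_const 3)))
    exact hglued.contDiffAt.congr_of_eventuallyEq
      (((continuous_abs.tendsto x).eventually_lt_const hx).mono
        fun y hy => compacton_eq_max_cos_zero_pow hy)
  · have hout : 3 * π / 2 < |x| := by linarith [pi_pos]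
    exact contDiffAt_const.congr_of_eventuallyEq
      (((continuous_abs.tendsto x).eventually_const_lt hout).mono
        fun y hy => if_neg (not_le.2 hy))

/-- The compacton is `C²` and solves `g'' = -4g + g|g|^{-1/3}` on
`(-3π/2, 3π/2)`. -/
theorem compacton_solves_ode :
    ContDiff ℝ 2 compacton ∧
    ∀ x ∈ Set.Ioo (-(3 * π / 2)) (3 * π / 2),
      deriv (deriv compacton) x
        = -4 * compacton x + compacton x * |compacton x| ^ (-(1:ℝ)/3) := by
  refine ⟨contDiff_compacton, fun x hx => ?_⟩
  have hvalue : compacton x = (3 / 10 * cos (x / 3) ^ 2) ^ 3 := by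
    rw [(compacton_eventuallyEq_of_mem_Ioo hx).eq_of_nhds]
    ring
  rw [(compacton_eventuallyEq_of_mem_Ioo hx).deriv.deriv.eq_of_nhds,
    deriv_deriv_const_mul_cos_div_three_pow_six, hvalue,
    pow_three_mul_abs_pow_three_rpow_neg_one_third (by positivity)]
  ring
end

section
/- The frequency function $\omega(q) = \sqrt{1 + 2v_1(1-\cos q)}$ with $v_1 > 0$ has exactly one inflection point $q_c$ in $(0,\pi)$, which lies in $(0, \pi/2)$ and satisfies $\cos q_c = v_1(1 - \cos q_c)^2$; equivalently, the quantity $\omega_2(q) = \cos q - \frac{v_1 \sin^2 q}{1 + 2v_1(1-\cos q)}$ vanishes exactly once on $(0,\pi)$, at $q = q_c \in (0,\pi/2)$, and changes sign there. -/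
/-!
Clearing the positive denominator `1 + 2v₁(1 - cos q)` and using `sin²q = 1 - cos²q` turns
`ω₂(q)` into `cos q - v₁(1 - cos q)²` up to a positive factor. This is a strictly increasing
function of `cos q ≤ 1`, hence strictly decreasing in `q ∈ [0, π]`; it equals `1` at `q = 0`
and `-v₁` at `q = π/2`, so it has a single zero `q_c ∈ (0, π/2)`, positive before it and
negative after.
-/

open Real Set

lemma strictMonoOn_sub_mul_one_sub_sq {v : ℝ} (hv : 0 ≤ v) :
    StrictMonoOn (fun c : ℝ => c - v * (1 - c) ^ 2) (Iic 1) := by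
  intro a ha b hb hab
  have hfactor : 0 ≤ v * (b - a) * (2 - a - b) :=
    mul_nonneg (mul_nonneg hv (sub_pos.mpr hab).le) (by linarith [mem_Iic.mp ha, mem_Iic.mp hb])
  nlinarith

lemma strictAntiOn_cos_sub_mul_one_sub_cos_sq {v : ℝ} (hv : 0 ≤ v) :
    StrictAntiOn (fun q : ℝ => cos q - v * (1 - cos q) ^ 2) (Icc 0 π) :=
  (strictMonoOn_sub_mul_one_sub_sq hv).comp_strictAntiOn strictAntiOn_cos
    fun q _ => cos_le_one q

lemma exists_cos_eq_mul_one_sub_cos_sq {v : ℝ} (hv : 0 < v) :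
    ∃ q ∈ Ioo 0 (π / 2), cos q - v * (1 - cos q) ^ 2 = 0 := by
  have hzero : (0 : ℝ) ∈
      Ioo (cos (π / 2) - v * (1 - cos (π / 2)) ^ 2) (cos 0 - v * (1 - cos 0) ^ 2) := by
    simp [hv]
  exact intermediate_value_Ioo' (by positivity) (by fun_prop) hzero

lemma one_add_two_mul_one_sub_cos_pos {v : ℝ} (hv : 0 ≤ v) (q : ℝ) :
    0 < 1 + 2 * v * (1 - cos q) := by
  nlinarith [cos_le_one q]

lemma cos_sub_mul_sin_sq_div_eq {v : ℝ} (hv : 0 ≤ v) (q : ℝ) :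
    cos q - v * sin q ^ 2 / (1 + 2 * v * (1 - cos q))
      = (cos q - v * (1 - cos q) ^ 2) / (1 + 2 * v * (1 - cos q)) := by
  have hD := (one_add_two_mul_one_sub_cos_pos hv q).ne'
  rw [eq_div_iff hD, sub_mul, div_mul_cancel₀ _ hD, sin_sq]
  ring

/-- The quantity `ω₂(q) = cos q - v₁ sin²q / (1 + 2v₁(1-cos q))` vanishes at
exactly one point `q_c` of `(0,π)`, which lies in `(0, π/2)`, satisfies
`cos q_c = v₁ (1 - cos q_c)²`, and `ω₂` changes sign there. -/
theorem inflection_point_unique (v₁ : ℝ) (hv₁ : 0 < v₁) :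
    ∃ qc : ℝ, qc ∈ Set.Ioo 0 (π/2) ∧
      Real.cos qc = v₁ * (1 - Real.cos qc) ^ 2 ∧
      (∀ q ∈ Set.Ioo (0:ℝ) π,
        (Real.cos q - v₁ * Real.sin q ^ 2 / (1 + 2 * v₁ * (1 - Real.cos q)) = 0
          ↔ q = qc)) ∧
      (∀ q ∈ Set.Ioo (0:ℝ) qc,
        0 < Real.cos q - v₁ * Real.sin q ^ 2 / (1 + 2 * v₁ * (1 - Real.cos q))) ∧
      (∀ q ∈ Set.Ioo qc π,
        Real.cos q - v₁ * Real.sin q ^ 2 / (1 + 2 * v₁ * (1 - Real.cos q)) < 0) := by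
  obtain ⟨qc, hqc, hroot⟩ := exists_cos_eq_mul_one_sub_cos_sq hv₁
  have hanti := strictAntiOn_cos_sub_mul_one_sub_cos_sq hv₁.le
  have hqc_mem : qc ∈ Icc 0 π := ⟨hqc.1.le, by linarith [hqc.2, pi_pos]⟩
  have hD := one_add_two_mul_one_sub_cos_pos hv₁.le
  simp only [cos_sub_mul_sin_sq_div_eq hv₁.le]
  refine ⟨qc, hqc, sub_eq_zero.mp hroot, fun q hq => ?_, fun q hq => ?_, fun q hq => ?_⟩
  · rw [div_eq_zero_iff, or_iff_left (hD q).ne', ← hroot]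
    exact hanti.injOn.eq_iff (Ioo_subset_Icc_self hq) hqc_mem
  · refine div_pos ?_ (hD q)
    simpa [hroot] using hanti ⟨hq.1.le, hq.2.le.trans hqc_mem.2⟩ hqc_mem hq.2
  · refine div_neg_of_neg_of_pos ?_ (hD q)
    simpa [hroot] using hanti hqc_mem ⟨hqc_mem.1.trans hq.1.le, hq.2.le⟩ hq.1
end
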